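/- arXiv:1612.07085 — 5 statements merged into one kernel-verified Lean document; each statement's English description precedes it below -/
import Mathlib

section
/- Let G be a k-regular finite simple graph on n ≥ 2 vertices, let θ_2 denote the second largest eigenvalue (with multiplicity) of its adjacency matrix, and let p be a positive integer. Then every (p+1)-plex P of G satisfies |V(P)| · (n - k + θ_2) ≤ n · (p + 1 + θ_2); in particular, when n - k + θ_2 > 0, the order of any (p+1)-plex of G is at most n(p + 1 + θ_2)/(n - k + θ_2). -/
/-!
Let `A` be the adjacency matrix, `N = |V|`, `c = |s|` and `θ = θ₂`. The all-ones vector is an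
eigenvector of `A` for its largest eigenvalue `k` (the upper bound `k` comes from Gershgorin's
theorem), so `xᵀ A x ≤ θ xᵀ x` for every `x` orthogonal to it. Applied to `x = N·1_s - c·1` this
gives the expander-mixing type bound `N · e(s) ≤ c² k + θ c (N - c)`, where `e(s)` counts ordered
adjacent pairs in `s`. In a `(p+1)`-plex `e(s) ≥ c (c - 1 - p)`, and dividing by `c` gives the
claim. For `s = ∅` one needs `θ ≥ -1`, which is the same bound applied to a single vertex.
-/

open SimpleGraph Polynomial

/-- A `p`-plex of `G` (as an induced subgraph, identified with its vertex set `s`):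
each vertex of `s` is adjacent to all but at most `p - 1` of the other vertices of `s`. -/
def IsPlex {V : Type*} [DecidableEq V] (G : SimpleGraph V) [DecidableRel G.Adj]
    (p : ℕ) (s : Finset V) : Prop :=
  ∀ x ∈ s, ((s.erase x).filter (fun y => ¬ G.Adj x y)).card ≤ p - 1

open Matrix
open scoped RealInnerProductSpace Finset

namespace LinearMap.IsSymmetric

variable {E : Type*} [NormedAddCommGroup E] [InnerProductSpace ℝ E] [FiniteDimensional ℝ E]
  {T : E →ₗ[ℝ] E} (hT : T.IsSymmetric) {n : ℕ} (hn : Module.finrank ℝ E = n)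

theorem inner_apply_self_eq_sum (x : E) :
    ⟪T x, x⟫ = ∑ i, hT.eigenvalues hn i * ⟪hT.eigenvectorBasis hn i, x⟫ ^ 2 := by
  rw [← (hT.eigenvectorBasis hn).sum_inner_mul_inner]
  refine Finset.sum_congr rfl fun i _ => ?_
  rw [hT, apply_eigenvectorBasis, real_inner_smul_right, real_inner_comm]
  simp only [RCLike.ofReal_real_eq_id, id_eq]
  ring

theorem eigenvalues_le_eigenvalues_one (h1 : 1 < n) {i : Fin n} (hi : i ≠ ⟨0, by omega⟩) :
    hT.eigenvalues hn i ≤ hT.eigenvalues hn ⟨1, h1⟩ :=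
  hT.eigenvalues_antitone hn <| Fin.mk_le_of_le_val <| by
    have : i.val ≠ 0 := fun h => hi (Fin.ext h)
    omega

/-- A spectral gap after the top eigenvalue makes its eigenspace a line. -/
theorem inner_eigenvectorBasis_zero_eq_zero (h1 : 1 < n)
    (hgap : hT.eigenvalues hn ⟨1, h1⟩ < hT.eigenvalues hn ⟨0, by omega⟩) {w x : E} (hw : w ≠ 0)
    (hTw : T w = hT.eigenvalues hn ⟨0, by omega⟩ • w) (hx : ⟪w, x⟫ = 0) :
    ⟪hT.eigenvectorBasis hn ⟨0, by omega⟩, x⟫ = 0 := by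
  set b := hT.eigenvectorBasis hn
  set i₀ : Fin n := ⟨0, by omega⟩
  have hcoord : ∀ i ≠ i₀, ⟪b i, w⟫ = 0 := by
    intro i hi
    by_contra hne
    have : hT.eigenvalues hn i * ⟪b i, w⟫ = hT.eigenvalues hn i₀ * ⟪b i, w⟫ :=
      calc hT.eigenvalues hn i * ⟪b i, w⟫ = ⟪T (b i), w⟫ := by
            rw [apply_eigenvectorBasis, real_inner_smul_left]; rfl
        _ = ⟪b i, T w⟫ := hT _ _
        _ = hT.eigenvalues hn i₀ * ⟪b i, w⟫ := by rw [hTw, real_inner_smul_right]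
    exact ((hT.eigenvalues_le_eigenvalues_one hn h1 hi).trans_lt hgap).ne
      (mul_right_cancel₀ hne this)
  have hw₀ : ⟪b i₀, w⟫ • b i₀ = w := by
    conv_rhs => rw [← b.sum_repr' w]
    rw [Finset.sum_eq_single i₀ (fun i _ hi => by rw [hcoord i hi, zero_smul]) (by simp)]
  have hd : ⟪b i₀, w⟫ ≠ 0 := by
    rintro hd
    rw [hd, zero_smul] at hw₀
    exact hw hw₀.symm
  rw [← hw₀, real_inner_smul_left] at hx
  exact (mul_eq_zero.mp hx).resolve_left hd

theorem inner_apply_self_le_eigenvalues_one_mul (h1 : 1 < n) {w x : E} (hw : w ≠ 0)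
    (hTw : T w = hT.eigenvalues hn ⟨0, by omega⟩ • w) (hx : ⟪w, x⟫ = 0) :
    ⟪T x, x⟫ ≤ hT.eigenvalues hn ⟨1, h1⟩ * ‖x‖ ^ 2 := by
  rw [hT.inner_apply_self_eq_sum hn, ← (hT.eigenvectorBasis hn).sum_sq_inner_right,
    Finset.mul_sum]
  refine Finset.sum_le_sum fun i _ => ?_
  by_cases hi : i = ⟨0, by omega⟩
  · subst hi
    rcases (hT.eigenvalues_antitone hn (Fin.mk_le_mk.mpr zero_le_one)).eq_or_lt with heq | hgap
    · rw [heq]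
    · rw [hT.inner_eigenvectorBasis_zero_eq_zero hn h1 hgap hw hTw hx]
      simp
  · exact mul_le_mul_of_nonneg_right (hT.eigenvalues_le_eigenvalues_one hn h1 hi) (sq_nonneg _)

end LinearMap.IsSymmetric

namespace Matrix.IsHermitian

variable {V : Type*} [Fintype V] [DecidableEq V] {A : Matrix V V ℝ} (hA : A.IsHermitian)

theorem range_eigenvalues₀ : Set.range hA.eigenvalues₀ = spectrum ℝ A := by
  rw [hA.spectrum_real_eq_range_eigenvalues]
  exact ((Fintype.equivOfCardEq (Fintype.card_fin _)).symm.surjective.range_comp _).symm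

theorem eq_eigenvalues₀_of_charpoly_eq_prod {μ : Fin (Fintype.card V) → ℝ} (hμ : Antitone μ)
    (hchar : A.charpoly = ∏ i, (X - C (μ i))) : μ = hA.eigenvalues₀ := by
  have hroots : A.charpoly.roots = Finset.univ.val.map μ := by
    rw [hchar, roots_prod _ _ (Finset.prod_ne_zero_iff.mpr fun i _ => X_sub_C_ne_zero (μ i))]
    simp
  rw [← List.ofFn_inj, ← hA.sort_roots_charpoly_eq_eigenvalues₀, hroots]
  simp_rw [Fin.univ_val_map, Multiset.map_coe, List.map_ofFn, Multiset.coe_sort]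
  refine (List.mergeSort_of_pairwise ?_).symm
  simp_rw [decide_eq_true_eq, ← List.sortedGE_iff_pairwise]
  exact hμ.sortedGE_ofFn

theorem dotProduct_mulVec_le_eigenvalues₀_one_mul (h1 : 1 < Fintype.card V) {v x : V → ℝ}
    (hv : v ≠ 0) (hAv : A *ᵥ v = hA.eigenvalues₀ ⟨0, by omega⟩ • v) (hx : v ⬝ᵥ x = 0) :
    x ⬝ᵥ A *ᵥ x ≤ hA.eigenvalues₀ ⟨1, h1⟩ * (x ⬝ᵥ x) := by
  have key := (isSymmetric_toEuclideanLin_iff.mpr hA).inner_apply_self_le_eigenvalues_one_mul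
    finrank_euclideanSpace h1 (w := WithLp.toLp 2 v) (x := WithLp.toLp 2 x)
    (by simpa using hv) (by rw [toLpLin_toLp]; exact congrArg (WithLp.toLp 2) hAv)
    (by rw [EuclideanSpace.inner_toLp_toLp, dotProduct_comm]; simpa using hx)
  rw [← real_inner_self_eq_norm_sq, toLpLin_toLp, EuclideanSpace.inner_toLp_toLp,
    EuclideanSpace.inner_toLp_toLp] at key
  simp only [star_trivial] at key
  exact key

end Matrix.IsHermitian

namespace SimpleGraph

variable {V : Type*} [Fintype V] {G : SimpleGraph V} [DecidableRel G.Adj] {k : ℕ}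

theorem IsRegularOfDegree.adjMatrix_mulVec_one (hreg : G.IsRegularOfDegree k) :
    G.adjMatrix ℝ *ᵥ 1 = (k : ℝ) • 1 := by
  ext v
  simp [hreg v]

theorem IsRegularOfDegree.abs_le_of_mem_spectrum [DecidableEq V] (hreg : G.IsRegularOfDegree k)
    {μ : ℝ} (hμ : μ ∈ spectrum ℝ (G.adjMatrix ℝ)) : |μ| ≤ k := by
  rw [← Matrix.spectrum_toLin', ← Module.End.hasEigenvalue_iff_mem_spectrum] at hμ
  obtain ⟨i, hi⟩ := eigenvalue_mem_ball hμ
  rw [Metric.mem_closedBall, Real.dist_eq] at hi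
  convert hi using 1
  · simp
  · rw [← hreg i, degree_eq_sum_if_adj, ← Finset.sum_erase _ (a := i) (by simp)]
    refine Finset.sum_congr rfl fun j _ => ?_
    by_cases h : G.Adj i j <;> simp [h]

theorem IsRegularOfDegree.mem_spectrum_adjMatrix [DecidableEq V] [Nonempty V]
    (hreg : G.IsRegularOfDegree k) : (k : ℝ) ∈ spectrum ℝ (G.adjMatrix ℝ) := by
  rw [← Matrix.spectrum_toLin', ← Module.End.hasEigenvalue_iff_mem_spectrum]
  exact Module.End.hasEigenvalue_of_hasEigenvector
    ⟨Module.End.mem_eigenspace_iff.mpr hreg.adjMatrix_mulVec_one, one_ne_zero⟩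

theorem IsRegularOfDegree.eigenvalues₀_zero [DecidableEq V] (hreg : G.IsRegularOfDegree k)
    (hV : 0 < Fintype.card V) : (G.isHermitian_adjMatrix ℝ).eigenvalues₀ ⟨0, hV⟩ = k := by
  have hA := G.isHermitian_adjMatrix ℝ
  have : Nonempty V := Fintype.card_pos_iff.mp hV
  apply le_antisymm
  · refine (le_abs_self _).trans (hreg.abs_le_of_mem_spectrum ?_)
    rw [← hA.range_eigenvalues₀]
    exact Set.mem_range_self _
  · obtain ⟨i, hi⟩ : (k : ℝ) ∈ Set.range hA.eigenvalues₀ := by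
      rw [hA.range_eigenvalues₀]
      exact hreg.mem_spectrum_adjMatrix
    rw [← hi]
    exact hA.eigenvalues₀_antitone (Fin.mk_le_of_le_val (Nat.zero_le _))

theorem IsRegularOfDegree.dotProduct_adjMatrix_mulVec_le [DecidableEq V]
    (hreg : G.IsRegularOfDegree k) (h1 : 1 < Fintype.card V) {x : V → ℝ} (hx : ∑ i, x i = 0) :
    x ⬝ᵥ G.adjMatrix ℝ *ᵥ x ≤ (G.isHermitian_adjMatrix ℝ).eigenvalues₀ ⟨1, h1⟩ * (x ⬝ᵥ x) := by
  have : Nonempty V := Fintype.card_pos_iff.mp (by omega)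
  refine (G.isHermitian_adjMatrix ℝ).dotProduct_mulVec_le_eigenvalues₀_one_mul h1 one_ne_zero ?_
    (by rwa [one_dotProduct])
  rw [hreg.eigenvalues₀_zero, hreg.adjMatrix_mulVec_one]

theorem IsRegularOfDegree.dotProduct_adjMatrix_mulVec_smul_sub_smul_one
    (hreg : G.IsRegularOfDegree k) (f : V → ℝ) (a b : ℝ) :
    (a • f - b • 1) ⬝ᵥ G.adjMatrix ℝ *ᵥ (a • f - b • 1) =
      a ^ 2 * (f ⬝ᵥ G.adjMatrix ℝ *ᵥ f) - 2 * a * b * k * ∑ i, f i +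
        b ^ 2 * k * Fintype.card V := by
  have h1Af : 1 ⬝ᵥ G.adjMatrix ℝ *ᵥ f = k * ∑ i, f i := by
    rw [dotProduct_mulVec, ← mulVec_transpose, transpose_adjMatrix, hreg.adjMatrix_mulVec_one,
      smul_dotProduct, one_dotProduct, smul_eq_mul]
  simp only [mulVec_sub, mulVec_smul, hreg.adjMatrix_mulVec_one, dotProduct_sub, sub_dotProduct,
    dotProduct_smul, smul_dotProduct, h1Af, dotProduct_one f, one_dotProduct_one, smul_eq_mul]
  ring

theorem IsRegularOfDegree.card_mul_sum_card_adj_le (hreg : G.IsRegularOfDegree k) {θ : ℝ}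
    (hθ : ∀ x : V → ℝ, ∑ i, x i = 0 → x ⬝ᵥ G.adjMatrix ℝ *ᵥ x ≤ θ * (x ⬝ᵥ x)) (s : Finset V) :
    (Fintype.card V : ℝ) * ∑ u ∈ s, (#{w ∈ s | G.Adj u w} : ℝ) ≤
      #s ^ 2 * k + θ * #s * (Fintype.card V - #s) := by
  classical
  set N : ℝ := (Fintype.card V : ℝ)
  set c : ℝ := (#s : ℝ)
  set f : V → ℝ := fun v => if v ∈ s then 1 else 0
  have hdot : ∀ g : V → ℝ, f ⬝ᵥ g = ∑ u ∈ s, g u := fun g => by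
    simp [f, dotProduct, ite_mul, Finset.sum_ite_mem]
  have hfAf : f ⬝ᵥ G.adjMatrix ℝ *ᵥ f = ∑ u ∈ s, (#{w ∈ s | G.Adj u w} : ℝ) := by
    rw [hdot]
    refine Finset.sum_congr rfl fun u _ => ?_
    simp only [f, adjMatrix_mulVec_apply, Finset.sum_boole]
    congr 2
    ext w
    simp [and_comm]
  have hsum : ∑ i, f i = c := by simpa [dotProduct_one] using hdot 1
  have hff : f ⬝ᵥ f = c := by simp [hdot, f, c]
  set x : V → ℝ := N • f - c • 1
  have hx : ∑ i, x i = 0 := by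
    simp only [x, Pi.sub_apply, Pi.smul_apply, Pi.one_apply, smul_eq_mul, Finset.sum_sub_distrib,
      ← Finset.mul_sum, hsum, Finset.sum_const, Finset.card_univ, nsmul_eq_mul]
    ring
  have hxx : x ⬝ᵥ x = N ^ 2 * c - N * c ^ 2 := by
    simp only [x, dotProduct_sub, sub_dotProduct, dotProduct_smul, smul_dotProduct, hff,
      dotProduct_one f, one_dotProduct f, one_dotProduct_one, hsum, smul_eq_mul]
    ring
  have key := hθ x hx
  rw [hreg.dotProduct_adjMatrix_mulVec_smul_sub_smul_one, hxx, hfAf, hsum] at key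
  rcases (Nat.cast_nonneg (Fintype.card V) : (0 : ℝ) ≤ N).eq_or_lt with hN | hN
  · have hc : c = 0 := by
      have : c ≤ N := Nat.cast_le.mpr (Finset.card_le_univ s)
      linarith [(Nat.cast_nonneg _ : (0 : ℝ) ≤ #s)]
    simp [show N = 0 from hN.symm, hc]
  · exact le_of_mul_le_mul_left (by linarith) hN

theorem IsRegularOfDegree.neg_one_le_eigenvalues₀_one [DecidableEq V]
    (hreg : G.IsRegularOfDegree k) (h1 : 1 < Fintype.card V) :
    -1 ≤ (G.isHermitian_adjMatrix ℝ).eigenvalues₀ ⟨1, h1⟩ := by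
  obtain ⟨v⟩ : Nonempty V := Fintype.card_pos_iff.mp (by omega)
  have h := hreg.card_mul_sum_card_adj_le (fun x hx => hreg.dotProduct_adjMatrix_mulVec_le h1 hx)
    {v}
  have hk : (k : ℝ) + 1 ≤ Fintype.card V := by
    exact_mod_cast hreg v ▸ G.degree_lt_card_verts v
  have h1' : (1 : ℝ) < Fintype.card V := by exact_mod_cast h1
  simp only [Finset.sum_singleton, Finset.card_singleton, Nat.cast_one, one_pow, one_mul,
    mul_one] at h
  nlinarith

end SimpleGraph

theorem IsPlex.card_mul_sub_le_sum_card_adj {V : Type*} [DecidableEq V] {G : SimpleGraph V}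
    [DecidableRel G.Adj] {p : ℕ} {s : Finset V} (hs : IsPlex G (p + 1) s) :
    (#s : ℝ) * (#s - 1 - p) ≤ ∑ u ∈ s, (#{w ∈ s | G.Adj u w} : ℝ) := by
  rw [← nsmul_eq_mul, ← Finset.sum_const]
  refine Finset.sum_le_sum fun u hu => ?_
  have hsplit := Finset.card_filter_add_card_filter_not (s := s.erase u) (fun w => G.Adj u w)
  rw [Finset.filter_erase, Finset.erase_eq_of_notMem (by simp),
    Finset.card_erase_of_mem hu] at hsplit
  have hnonadj : #{w ∈ s.erase u | ¬G.Adj u w} ≤ p := hs u hu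
  have hpos := Finset.card_pos.mpr ⟨u, hu⟩
  rw [sub_sub, sub_le_iff_le_add]
  exact_mod_cast (by omega : #s ≤ #{w ∈ s | G.Adj u w} + (1 + p))

theorem plex_order_bound {V : Type*} [Fintype V] [DecidableEq V]
    (G : SimpleGraph V) [DecidableRel G.Adj]
    (k n : ℕ) (hn : n = Fintype.card V) (hn2 : 2 ≤ n)
    (hreg : G.IsRegularOfDegree k)
    -- `μ` lists the eigenvalues of the adjacency matrix of `G`, with multiplicity,
    -- in nonincreasing order; `μ ⟨1, _⟩` is the second largest eigenvalue `θ₂`.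
    (μ : Fin n → ℝ) (hmono : Antitone μ)
    (hchar : (G.adjMatrix ℝ).charpoly = ∏ i, (X - C (μ i)))
    (p : ℕ)
    (s : Finset V) (hs : IsPlex G (p + 1) s) :
    (s.card : ℝ) * ((n : ℝ) - k + μ ⟨1, by omega⟩) ≤
        (n : ℝ) * ((p : ℝ) + 1 + μ ⟨1, by omega⟩) ∧
      (0 < (n : ℝ) - k + μ ⟨1, by omega⟩ →
        (s.card : ℝ) ≤
          (n : ℝ) * ((p : ℝ) + 1 + μ ⟨1, by omega⟩) / ((n : ℝ) - k + μ ⟨1, by omega⟩)) := by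
  subst hn
  obtain rfl := (G.isHermitian_adjMatrix ℝ).eq_eigenvalues₀_of_charpoly_eq_prod hmono hchar
  have hedge := hreg.card_mul_sum_card_adj_le
    (fun x hx => hreg.dotProduct_adjMatrix_mulVec_le hn2 hx) s
  have hplex := hs.card_mul_sub_le_sum_card_adj
  have hθ := hreg.neg_one_le_eigenvalues₀_one hn2
  set θ := (G.isHermitian_adjMatrix ℝ).eigenvalues₀ ⟨1, hn2⟩
  have hN : (0 : ℝ) ≤ Fintype.card V := Nat.cast_nonneg _
  have hbound : (#s : ℝ) * (Fintype.card V - k + θ) ≤ Fintype.card V * (p + 1 + θ) := by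
    rcases (Nat.cast_nonneg #s : (0 : ℝ) ≤ #s).eq_or_lt with hc | hc
    · rw [← hc, zero_mul]
      exact mul_nonneg hN (by linarith [(Nat.cast_nonneg p : (0 : ℝ) ≤ p)])
    · refine sub_nonpos.mp (nonpos_of_mul_nonpos_right ?_ hc)
      nlinarith [mul_le_mul_of_nonneg_left hplex hN]
  exact ⟨hbound, fun hpos => (le_div_iff₀ hpos).2 hbound⟩
end

section
/- Let G be a connected k-regular finite simple graph whose adjacency matrix A has exactly four distinct eigenvalues. Then G is walk-regular: for every non-negative integer r, the diagonal entries of A^r are all equal, i.e. (A^r)_{xx} = (A^r)_{yy} for all vertices x, y of G. -/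
open SimpleGraph Polynomial Matrix

/-- An eigenvector of a connected `k`-regular graph for the eigenvalue `k` is constant. -/
lemma aux_eigenvector_const {V : Type*} [Fintype V] [DecidableEq V]
    (G : SimpleGraph V) [DecidableRel G.Adj] (k : ℕ)
    (hconn : G.Connected) (hreg : G.IsRegularOfDegree k)
    (v : V → ℝ) (hv : G.adjMatrix ℝ *ᵥ v = (k : ℝ) • v) :
    ∀ x y : V, v x = v y := by
  have hne : Nonempty V := hconn.nonempty
  obtain ⟨x₀, -, hx₀⟩ := Finset.exists_max_image Finset.univ v
    ⟨Classical.arbitrary V, Finset.mem_univ _⟩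
  suffices h : ∀ y, v y = v x₀ by intro x y; rw [h x, h y]
  have step : ∀ a b : V, v a = v x₀ → G.Adj a b → v b = v x₀ := by
    intro a b ha hab
    have hsum : ∑ w ∈ G.neighborFinset a, v w = (k : ℝ) * v x₀ := by
      have := congrFun hv a
      rwa [adjMatrix_mulVec_apply, Pi.smul_apply, smul_eq_mul, ha] at this
    have hsum0 : ∑ w ∈ G.neighborFinset a, (v x₀ - v w) = 0 := by
      rw [Finset.sum_sub_distrib, hsum, Finset.sum_const,
        card_neighborFinset_eq_degree, hreg a, nsmul_eq_mul, sub_self]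
    have hb : b ∈ G.neighborFinset a := (G.mem_neighborFinset a b).mpr hab
    have := (Finset.sum_eq_zero_iff_of_nonneg
      (fun w _ => sub_nonneg.mpr (hx₀ w (Finset.mem_univ w)))).mp hsum0 b hb
    linarith
  have key : ∀ (a c : V) (w : G.Walk a c), v a = v x₀ → v c = v x₀ := by
    intro a c w
    induction w with
    | nil => exact id
    | @cons a b c hab p ih => exact fun ha => ih (step a b ha hab)
  intro y
  obtain ⟨w⟩ := hconn x₀ y
  exact key x₀ y w rfl

/-- Conjugation by a matrix `U` with `star U * U = 1 = U * star U` as an algebra hom. -/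
noncomputable def auxConjAlgHom {V : Type*} [Fintype V] [DecidableEq V]
    (U : Matrix V V ℝ) (h1 : star U * U = 1) (h2 : U * star U = 1) :
    Matrix V V ℝ →ₐ[ℝ] Matrix V V ℝ where
  toFun M := U * M * star U
  map_one' := by show U * 1 * star U = 1; rw [mul_one, h2]
  map_mul' M N := by
    show U * (M * N) * star U = U * M * star U * (U * N * star U)
    simp only [mul_assoc]
    rw [← mul_assoc (star U) U, h1, one_mul]
  map_zero' := by simp
  map_add' M N := by noncomm_ring
  commutes' r := by
    simp [Algebra.algebraMap_eq_smul_one, Matrix.mul_smul, Matrix.smul_mul, h2]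

/-- Matrices with constant diagonal form a submodule. -/
def auxConstDiag (V : Type*) [Fintype V] [DecidableEq V] : Submodule ℝ (Matrix V V ℝ) where
  carrier := {M : Matrix V V ℝ | ∀ x y : V, M x x = M y y}
  add_mem' := fun ha hb x y => by simp only [Matrix.add_apply, ha x y, hb x y]
  zero_mem' := fun x y => rfl
  smul_mem' := fun c M hM x y => by simp only [Matrix.smul_apply, hM x y]

lemma auxConstDiag_mem {V : Type*} [Fintype V] [DecidableEq V] {M : Matrix V V ℝ} :
    M ∈ auxConstDiag V ↔ ∀ x y : V, M x x = M y y := Iff.rfl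

theorem four_distinct_eigenvalues_walk_regular {V : Type*} [Fintype V] [DecidableEq V]
    (G : SimpleGraph V) [DecidableRel G.Adj] (k : ℕ)
    (hconn : G.Connected) (hreg : G.IsRegularOfDegree k)
    (hfour : ∃ s : Finset ℝ, s.card = 4 ∧ spectrum ℝ (G.adjMatrix ℝ) = ↑s) :
    ∀ (r : ℕ) (x y : V), ((G.adjMatrix ℝ) ^ r) x x = ((G.adjMatrix ℝ) ^ r) y y := by
  obtain ⟨s, hcard, hspec⟩ := hfour
  have hne : Nonempty V := hconn.nonempty
  set A : Matrix V V ℝ := G.adjMatrix ℝ with hA_def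
  -- A is Hermitian
  have hA : A.IsHermitian := by
    have := G.isSymm_adjMatrix (α := ℝ)
    rwa [Matrix.IsHermitian, Matrix.conjTranspose_eq_transpose_of_trivial]
  -- k is an eigenvalue
  have hAone : A *ᵥ (fun _ => (1 : ℝ)) = (k : ℝ) • (fun _ => (1 : ℝ)) := by
    funext i
    show (A *ᵥ Function.const V (1:ℝ)) i = ((k:ℝ) • fun _ => (1:ℝ)) i
    rw [adjMatrix_mulVec_const_apply_of_regular hreg]
    simp
  have hk : (k : ℝ) ∈ s := by
    rw [← Finset.mem_coe, ← hspec, spectrum.mem_iff]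
    intro hunit
    rw [Matrix.isUnit_iff_isUnit_det, isUnit_iff_ne_zero] at hunit
    apply hunit
    rw [← Matrix.exists_mulVec_eq_zero_iff]
    refine ⟨fun _ => (1 : ℝ), ?_, ?_⟩
    · intro h0
      exact one_ne_zero (congrFun h0 (Classical.arbitrary V))
    · rw [Matrix.sub_mulVec, hAone, Algebra.algebraMap_eq_smul_one,
        Matrix.smul_mulVec, Matrix.one_mulVec]
      ext i
      simp
  -- the polynomial with the eigenvalues as roots annihilates A
  set q : Polynomial ℝ := ∏ lam ∈ s, (X - C lam) with hq_def
  have hq_monic : q.Monic := monic_prod_of_monic _ _ fun lam _ => monic_X_sub_C lam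
  have hq_deg : q.natDegree = 4 := by
    rw [hq_def, natDegree_prod _ _ fun lam _ => X_sub_C_ne_zero lam]
    simp [hcard]
  have haq : aeval A q = 0 := by
    have hU1 : star (hA.eigenvectorUnitary : Matrix V V ℝ) *
        (hA.eigenvectorUnitary : Matrix V V ℝ) = 1 := Unitary.coe_star_mul_self _
    have hU2 : (hA.eigenvectorUnitary : Matrix V V ℝ) *
        star (hA.eigenvectorUnitary : Matrix V V ℝ) = 1 := Unitary.coe_mul_star_self _
    set f := auxConjAlgHom (hA.eigenvectorUnitary : Matrix V V ℝ) hU1 hU2 with hf_def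
    have hAf : A = f (Matrix.diagonal (RCLike.ofReal ∘ hA.eigenvalues)) :=
      hA.spectral_theorem
    have hdiag : Matrix.diagonal (RCLike.ofReal ∘ hA.eigenvalues) =
        (Matrix.diagonalAlgHom ℝ : (V → ℝ) →ₐ[ℝ] Matrix V V ℝ) (RCLike.ofReal ∘ hA.eigenvalues) := rfl
    rw [hAf, aeval_algHom_apply, hdiag, aeval_algHom_apply]
    have : aeval (RCLike.ofReal ∘ hA.eigenvalues : V → ℝ) q = 0 := by
      funext i
      rw [aeval_fn_apply]
      have hmem : (RCLike.ofReal ∘ hA.eigenvalues) i ∈ s := by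
        rw [← Finset.mem_coe, ← hspec]
        simpa using hA.eigenvalues_mem_spectrum_real i
      simp only [hq_def, aeval_def, eval₂_eq_eval_map, Polynomial.map_prod,
        Polynomial.map_sub, map_X, map_C]
      rw [eval_prod]
      exact Finset.prod_eq_zero hmem (by simp)
    rw [this, map_zero, map_zero]
  -- factor q = (X - C k) * g
  set g : Polynomial ℝ := ∏ lam ∈ s.erase (k : ℝ), (X - C lam) with hg_def
  have hg_monic : g.Monic := monic_prod_of_monic _ _ fun lam _ => monic_X_sub_C lam
  have hg_deg : g.natDegree = 3 := by
    rw [hg_def, natDegree_prod _ _ fun lam _ => X_sub_C_ne_zero lam]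
    simp [Finset.card_erase_of_mem hk, hcard]
  have hfac : q = (X - C (k : ℝ)) * g := (Finset.mul_prod_erase s _ hk).symm
  set B : Matrix V V ℝ := aeval A g with hB_def
  have hAB : A * B = (k : ℝ) • B := by
    have h0 : (A - (k : ℝ) • 1) * B = 0 := by
      have h := haq
      rw [hfac, _root_.map_mul, map_sub, aeval_X, aeval_C,
        Algebra.algebraMap_eq_smul_one] at h
      exact h
    rw [sub_mul, sub_eq_zero, smul_mul_assoc, one_mul] at h0
    exact h0
  have hcol : ∀ j i i' : V, B i j = B i' j := by
    intro j
    have hv : A *ᵥ (fun i => B i j) = (k : ℝ) • (fun i => B i j) := by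
      funext i
      have h := congrFun (congrFun hAB i) j
      simpa [Matrix.mul_apply, Matrix.mulVec, dotProduct] using h
    exact aux_eigenvector_const G k hconn hreg _ hv
  have hApow_symm : ∀ (n : ℕ) (x y : V), (A ^ n) x y = (A ^ n) y x := by
    intro n x y
    exact ((G.isSymm_adjMatrix (α := ℝ)).pow n).apply y x
  have hBsymm : ∀ x y : V, B x y = B y x := by
    intro x y
    rw [hB_def, aeval_eq_sum_range]
    simp only [Matrix.sum_apply, Matrix.smul_apply]
    exact Finset.sum_congr rfl fun i _ => by rw [hApow_symm i x y]
  set W : Submodule ℝ (Matrix V V ℝ) := auxConstDiag V with hW_def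
  have hBW : B ∈ W := by
    rw [auxConstDiag_mem]
    intro x y
    calc B x x = B y x := hcol x x y
    _ = B x y := hBsymm y x
    _ = B y y := hcol y x y
  have h1W : (1 : Matrix V V ℝ) ∈ W := by
    rw [auxConstDiag_mem]
    intro x y
    rw [Matrix.one_apply_eq, Matrix.one_apply_eq]
  have hAW : A ∈ W := by
    rw [auxConstDiag_mem]
    intro x y
    simp [hA_def]
  have hA2W : A ^ 2 ∈ W := by
    rw [auxConstDiag_mem]
    intro x y
    rw [pow_two]
    show (G.adjMatrix ℝ * G.adjMatrix ℝ) x x = (G.adjMatrix ℝ * G.adjMatrix ℝ) y y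
    rw [adjMatrix_mul_self_apply_self, adjMatrix_mul_self_apply_self, hreg x, hreg y]
  have hgB : B = g.coeff 0 • A ^ 0 + g.coeff 1 • A ^ 1 + g.coeff 2 • A ^ 2 + A ^ 3 := by
    have h := aeval_eq_sum_range (p := g) A
    rw [hg_deg] at h
    rw [hB_def, h, Finset.sum_range_succ, Finset.sum_range_succ, Finset.sum_range_succ,
      Finset.sum_range_one]
    have h3 : g.coeff 3 = 1 := by
      have h' := hg_monic.coeff_natDegree
      rwa [hg_deg] at h'
    rw [h3, one_smul]
  have hA3W : A ^ 3 ∈ W := by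
    have he : A ^ 3 = B - (g.coeff 0 • A ^ 0 + g.coeff 1 • A ^ 1 + g.coeff 2 • A ^ 2) := by
      rw [hgB]; abel
    rw [he]
    refine W.sub_mem hBW (W.add_mem (W.add_mem (W.smul_mem _ ?_) (W.smul_mem _ ?_))
      (W.smul_mem _ hA2W))
    · rw [pow_zero]; exact h1W
    · rw [pow_one]; exact hAW
  set S : Submodule ℝ (Matrix V V ℝ) := Submodule.span ℝ {1, A, A ^ 2, A ^ 3} with hS_def
  have h1S : (1 : Matrix V V ℝ) ∈ S := Submodule.subset_span (by simp)
  have hAS : A ∈ S := Submodule.subset_span (by simp)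
  have hA2S : A ^ 2 ∈ S := Submodule.subset_span (by simp)
  have hA3S : A ^ 3 ∈ S := Submodule.subset_span (by simp)
  have hA4S : A ^ 4 ∈ S := by
    have hq4 : aeval A q = q.coeff 0 • A ^ 0 + q.coeff 1 • A ^ 1 + q.coeff 2 • A ^ 2
        + q.coeff 3 • A ^ 3 + A ^ 4 := by
      have h := aeval_eq_sum_range (p := q) A
      rw [hq_deg] at h
      rw [h, Finset.sum_range_succ, Finset.sum_range_succ, Finset.sum_range_succ,
        Finset.sum_range_succ, Finset.sum_range_one]
      have h4 : q.coeff 4 = 1 := by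
        have h' := hq_monic.coeff_natDegree
        rwa [hq_deg] at h'
      rw [h4, one_smul]
    rw [haq] at hq4
    have he : A ^ 4 = -(q.coeff 0 • A ^ 0 + q.coeff 1 • A ^ 1 + q.coeff 2 • A ^ 2
        + q.coeff 3 • A ^ 3) :=
      by rw [eq_neg_iff_add_eq_zero, add_comm]; exact hq4.symm
    rw [he]
    refine S.neg_mem (S.add_mem (S.add_mem (S.add_mem (S.smul_mem _ ?_)
      (S.smul_mem _ ?_)) (S.smul_mem _ hA2S)) (S.smul_mem _ hA3S))
    · rw [pow_zero]; exact h1S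
    · rw [pow_one]; exact hAS
  have hmulS : ∀ M ∈ S, A * M ∈ S := by
    intro M hM
    induction hM using Submodule.span_induction with
    | mem x hx =>
      simp only [Set.mem_insert_iff, Set.mem_singleton_iff] at hx
      rcases hx with rfl | rfl | rfl | rfl
      · rw [mul_one]; exact hAS
      · rw [← pow_two]; exact hA2S
      · rw [← pow_succ']; exact hA3S
      · rw [← pow_succ']; exact hA4S
    | zero => simp only [mul_zero]; exact S.zero_mem
    | add x y hx hy ihx ihy => rw [mul_add]; exact S.add_mem ihx ihy
    | smul c x hx ih => rw [mul_smul_comm]; exact S.smul_mem _ ih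
  have hpowS : ∀ r : ℕ, A ^ r ∈ S := by
    intro r
    induction r with
    | zero => simpa using h1S
    | succ n ih => rw [pow_succ']; exact hmulS _ ih
  have hSW : S ≤ W := by
    rw [hS_def, Submodule.span_le]
    intro M hM
    simp only [Set.mem_insert_iff, Set.mem_singleton_iff] at hM
    rcases hM with rfl | rfl | rfl | rfl
    · exact h1W
    · exact hAW
    · exact hA2W
    · exact hA3W
  intro r x y
  exact (auxConstDiag_mem.mp (hSW (hpowS r))) x y
end

section
/- Let t be a positive integer and let S be an n×n irreducible symmetric matrix with integer entries such that S_{xx} ≤ -t for every index x, S_{xy} ≤ 1 for all distinct indices x, y, S_{xx} ≤ S_{xy} for all x, y, and no principal submatrix of S is equivalent to an element of M(t). Then the smallest eigenvalue of S is at least -t-1 and S is equivalent to one of: (i) the 1×1 matrix (-t); (ii) the 1×1 matrix (-t-1); (iii) J_n - (t+1)I_n; (iv) the block matrix with diagonal blocks J_{r_1} - (t+1)I_{r_1} and J_{r_2} - (t+1)I_{r_2} and off-diagonal blocks -J_{r_1×r_2} and -J_{r_2×r_1}, for some positive integers r_1, r_2 with r_1 + r_2 = n. -/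
open Matrix

/-- The 1×1 matrices of `M(t)`: `(-t+a)` for integers `a ≤ -2`. -/
def inM1 (t : ℕ) (B : Matrix (Fin 1) (Fin 1) ℤ) : Prop :=
  ∃ a : ℤ, a ≤ -2 ∧ B = !![-(t : ℤ) + a]

/-- The 2×2 matrices of `M(t)`. -/
def inM2 (t : ℕ) (B : Matrix (Fin 2) (Fin 2) ℤ) : Prop :=
  (∃ a : ℤ, -(t : ℤ) ≤ a ∧ a ≤ -2 ∧ B = !![-(t : ℤ), a; a, -(t : ℤ)]) ∨
  (∃ a : ℤ, (a = 1 ∨ (-(t : ℤ) ≤ a ∧ a ≤ -1)) ∧ B = !![-(t : ℤ) - 1, a; a, -(t : ℤ)]) ∨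
  (∃ a : ℤ, (a = 1 ∨ (-(t : ℤ) - 1 ≤ a ∧ a ≤ -1)) ∧ B = !![-(t : ℤ) - 1, a; a, -(t : ℤ) - 1])

/-- The 3×3 matrices of `M(t)`: `m₅(t), m₆(t), m₇(t), m₈(t), m₉(t)`. -/
def inM3 (t : ℕ) (B : Matrix (Fin 3) (Fin 3) ℤ) : Prop :=
  B = !![-(t : ℤ), -1, -1; -1, -(t : ℤ), -1; -1, -1, -(t : ℤ)] ∨
  B = !![-(t : ℤ), 1, 1; 1, -(t : ℤ), -1; 1, -1, -(t : ℤ)] ∨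
  B = !![-(t : ℤ), 0, 1; 0, -(t : ℤ), -1; 1, -1, -(t : ℤ)] ∨
  B = !![-(t : ℤ), 0, 1; 0, -(t : ℤ), 1; 1, 1, -(t : ℤ)] ∨
  B = !![-(t : ℤ), 0, -1; 0, -(t : ℤ), -1; -1, -1, -(t : ℤ)]

/-!
The forbidden `1 × 1` and `2 × 2` matrices force every diagonal entry to be `-t` or `-t - 1`,
make a row with diagonal entry `-t - 1` vanish off the diagonal, and, once the diagonal is
constantly `-t`, put every off-diagonal entry in `{-1, 0, 1}`. The forbidden `3 × 3` matrices
`m₅, …, m₉` are exactly the triangles violating `S x y = S x z * S z y` for nonzero `S x z` and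
`S z y`. With irreducibility this makes every off-diagonal entry `±1`, and normalising by one row
gives `S = σ σᵀ - (t + 1) I` for a `±1`-vector `σ`. Hence `S + (t + 1) I` is positive
semidefinite, and sorting the indices by the sign of `σ` gives the two-block form.
-/

open Finset

theorem Fin.exists_perm_mem_iff_lt {n : ℕ} (s : Finset (Fin n)) :
    ∃ e : Equiv.Perm (Fin n), ∀ i, e i ∈ s ↔ (i : ℕ) < #s := by
  have hcard : #s + #sᶜ = n := by simp [card_add_card_compl]
  let e' : Fin (#s + #sᶜ) ≃ Fin n := finSumFinEquiv.symm.trans (finSumEquivOfFinset rfl rfl)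
  have he' : ∀ j, e' j ∈ s ↔ (j : ℕ) < #s := by
    refine Fin.addCases (fun j => ?_) (fun j => ?_)
    · simp [e', orderEmbOfFin_mem, j.isLt]
    · simpa [e'] using mem_compl.mp (orderEmbOfFin_mem sᶜ rfl j)
  refine ⟨(finCongr hcard.symm).trans e', fun i => ?_⟩
  simpa using he' (finCongr hcard.symm i)

namespace Matrix

variable {ι R : Type*}

/-- `S` is permutation-equivalent to a block-diagonal matrix with at least two blocks, `s` being
the index set of one of them. -/
def IsDecomposable [Fintype ι] [Zero R] (S : Matrix ι ι R) : Prop :=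
  ∃ s : Finset ι, s.Nonempty ∧ s ≠ univ ∧ ∀ i ∈ s, ∀ j ∉ s, S i j = 0

def AvoidsPrincipalSubmatrix (k : ℕ) (P : Matrix (Fin k) (Fin k) R → Prop)
    (S : Matrix ι ι R) : Prop :=
  ¬ ∃ f : Fin k → ι, Function.Injective f ∧
    ∃ e : Equiv.Perm (Fin k), P ((S.submatrix f f).submatrix e e)

namespace AvoidsPrincipalSubmatrix

variable {S : Matrix ι ι R}

theorem not_one {P : Matrix (Fin 1) (Fin 1) R → Prop} (h : AvoidsPrincipalSubmatrix 1 P S)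
    (x : ι) : ¬ P !![S x x] := fun hP =>
  h ⟨![x], Function.injective_of_subsingleton _, Equiv.refl _, by
    convert hP using 1; ext i j; fin_cases i; fin_cases j; rfl⟩

theorem not_two {P : Matrix (Fin 2) (Fin 2) R → Prop} (h : AvoidsPrincipalSubmatrix 2 P S)
    {x y : ι} (hxy : x ≠ y) : ¬ P !![S x x, S x y; S y x, S y y] := fun hP =>
  h ⟨![x, y], by simp [Function.Injective, Fin.forall_fin_two, hxy, hxy.symm], Equiv.refl _, by
    convert hP using 1; ext i j; fin_cases i <;> fin_cases j <;> rfl⟩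

theorem not_three {P : Matrix (Fin 3) (Fin 3) R → Prop} (h : AvoidsPrincipalSubmatrix 3 P S)
    {x y z : ι} (hxy : x ≠ y) (hxz : x ≠ z) (hyz : y ≠ z) :
    ¬ P !![S x x, S x y, S x z; S y x, S y y, S y z; S z x, S z y, S z z] := fun hP =>
  h ⟨![x, y, z], by
    simp [Function.Injective, Fin.forall_fin_succ, hxy, hxz, hyz, hxy.symm, hxz.symm, hyz.symm],
    Equiv.refl _, by convert hP using 1; ext i j; fin_cases i <;> fin_cases j <;> rfl⟩

end AvoidsPrincipalSubmatrix

section Decomposable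

variable [Fintype ι] [Zero R] {S : Matrix ι ι R}

theorem exists_ne_zero_of_not_isDecomposable [Nontrivial ι] (hirr : ¬ S.IsDecomposable)
    (x : ι) : ∃ y ≠ x, S x y ≠ 0 := by
  by_contra! h
  exact hirr ⟨{x}, singleton_nonempty x, singleton_ne_univ x, fun i hi j hj => by
    rw [mem_singleton] at hi hj; exact hi ▸ h j hj⟩

theorem ne_zero_of_not_isDecomposable (hirr : ¬ S.IsDecomposable)
    (htrans : ∀ x y z, x ≠ y → x ≠ z → y ≠ z → S x z ≠ 0 → S z y ≠ 0 → S x y ≠ 0)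
    {x y : ι} (hxy : x ≠ y) : S x y ≠ 0 := by
  classical
  intro hxy0
  refine hirr ⟨univ.filter (fun k => k = x ∨ S x k ≠ 0), ⟨x, by simp⟩,
    fun h => ?_, fun i hi j hj => ?_⟩
  · have hy := h.symm ▸ mem_univ y
    simp [hxy.symm, hxy0] at hy
  simp only [mem_filter, mem_univ, true_and, not_or, not_not] at hi hj
  obtain ⟨hjx, hxj⟩ := hj
  by_cases hix : i = x
  · exact hix ▸ hxj
  have hxi : S x i ≠ 0 := hi.resolve_left hix
  have hji : j ≠ i := fun h => hxi (h ▸ hxj)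
  by_contra hij
  exact htrans x j i (Ne.symm hjx) (Ne.symm hix) hji hxi hij hxj

end Decomposable

theorem exists_sign_vector [CommRing R] {S : Matrix ι ι R} [Nonempty ι] [DecidableEq ι]
    (hsym : S.IsSymm) (hpm : ∀ x y, x ≠ y → S x y = 1 ∨ S x y = -1)
    (hmul : ∀ x y z, x ≠ y → x ≠ z → y ≠ z → S x y = S x z * S z y) :
    ∃ σ : ι → R, (∀ i, σ i = 1 ∨ σ i = -1) ∧ ∀ i j, i ≠ j → S i j = σ i * σ j := by
  obtain ⟨x₀⟩ := ‹Nonempty ι›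
  refine ⟨fun k => if k = x₀ then 1 else S x₀ k, fun i => ?_, fun i j hij => ?_⟩
  · by_cases hi : i = x₀
    · simp [hi]
    · simpa [hi] using hpm x₀ i (Ne.symm hi)
  by_cases hi : i = x₀
  · subst hi; simp [hij.symm]
  by_cases hj : j = x₀
  · subst hj; simp [hi, hsym.apply]
  simp only [hi, hj, if_false]
  rw [hmul i j x₀ hij hi hj, hsym.apply]

theorem neg_le_of_mem_spectrum_vecMulVec_self_sub [Fintype ι] [DecidableEq ι] (w : ι → ℝ)
    (c : ℝ) {μ : ℝ}
    (hμ : μ ∈ spectrum ℝ (vecMulVec w w - algebraMap ℝ (Matrix ι ι ℝ) c)) : -c ≤ μ := by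
  rw [← spectrum.sub_singleton_eq] at hμ
  obtain ⟨ν, hν, _, rfl, rfl⟩ := hμ
  have hPSD : (vecMulVec w w).PosSemidef := by simpa using posSemidef_vecMulVec_self_star w
  have : 0 ≤ ν := (posSemidef_iff_isHermitian_and_spectrum_nonneg.mp hPSD).2 hν
  linarith

section Special

variable {t : ℕ} {S : Matrix ι ι ℤ}

theorem diag_eq_neg_or_eq_neg_sub_one (hdiag : ∀ x, S x x ≤ -(t : ℤ))
    (h1 : S.AvoidsPrincipalSubmatrix 1 (inM1 t)) (x : ι) :
    S x x = -(t : ℤ) ∨ S x x = -(t : ℤ) - 1 := by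
  by_contra! hx
  exact h1.not_one x ⟨S x x + t, by have := hdiag x; omega, by simp⟩

theorem eq_zero_of_diag_eq_neg_sub_one (hsym : S.IsSymm) (hdiag : ∀ x, S x x ≤ -(t : ℤ))
    (hle : ∀ x y, S x x ≤ S x y) (hoffdiag : ∀ x y, x ≠ y → S x y ≤ 1)
    (h1 : S.AvoidsPrincipalSubmatrix 1 (inM1 t)) (h2 : S.AvoidsPrincipalSubmatrix 2 (inM2 t))
    {x y : ι} (hxy : x ≠ y) (hx : S x x = -(t : ℤ) - 1) : S x y = 0 := by
  by_contra hxy0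
  have hyx := hsym.apply x y
  have := hle y x
  have := hoffdiag x y hxy
  refine h2.not_two hxy ?_
  rcases diag_eq_neg_or_eq_neg_sub_one hdiag h1 y with hy | hy
  · exact Or.inr (Or.inl ⟨S x y, by omega, by rw [hx, hy, hyx]⟩)
  · exact Or.inr (Or.inr ⟨S x y, by omega, by rw [hx, hy, hyx]⟩)

theorem diag_eq_neg_of_not_isDecomposable [Fintype ι] [Nontrivial ι] (hsym : S.IsSymm)
    (hdiag : ∀ x, S x x ≤ -(t : ℤ)) (hle : ∀ x y, S x x ≤ S x y)
    (hoffdiag : ∀ x y, x ≠ y → S x y ≤ 1) (h1 : S.AvoidsPrincipalSubmatrix 1 (inM1 t))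
    (h2 : S.AvoidsPrincipalSubmatrix 2 (inM2 t)) (hirr : ¬ S.IsDecomposable) (x : ι) :
    S x x = -(t : ℤ) :=
  (diag_eq_neg_or_eq_neg_sub_one hdiag h1 x).resolve_right fun hx => by
    obtain ⟨y, hyx, hxy⟩ := exists_ne_zero_of_not_isDecomposable hirr x
    exact hxy (eq_zero_of_diag_eq_neg_sub_one hsym hdiag hle hoffdiag h1 h2 hyx.symm hx)

theorem offDiag_eq_neg_one_or_zero_or_one (hsym : S.IsSymm) (hdt : ∀ x, S x x = -(t : ℤ))
    (hle : ∀ x y, S x x ≤ S x y) (hoffdiag : ∀ x y, x ≠ y → S x y ≤ 1)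
    (h2 : S.AvoidsPrincipalSubmatrix 2 (inM2 t)) {x y : ι} (hxy : x ≠ y) :
    S x y = -1 ∨ S x y = 0 ∨ S x y = 1 := by
  by_contra! h
  have := hle x y
  have := hdt x
  have := hoffdiag x y hxy
  refine h2.not_two hxy (Or.inl ⟨S x y, by omega, by omega, ?_⟩)
  rw [hdt, hdt, hsym.apply]

theorem eq_mul_of_ne_zero_of_ne_zero (hsym : S.IsSymm) (hdt : ∀ x, S x x = -(t : ℤ))
    (hrange : ∀ x y, x ≠ y → S x y = -1 ∨ S x y = 0 ∨ S x y = 1)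
    (h3 : S.AvoidsPrincipalSubmatrix 3 (inM3 t)) {x y z : ι}
    (hxy : x ≠ y) (hxz : x ≠ z) (hyz : y ≠ z) (hxz0 : S x z ≠ 0) (hzy0 : S z y ≠ 0) :
    S x y = S x z * S z y := by
  have hxyz := h3.not_three hxy hxz hyz
  have hzxy := h3.not_three hxz.symm hyz.symm hxy
  have hyxz := h3.not_three hxy.symm hyz hxz
  rw [hsym.apply x y, hsym.apply x z, hsym.apply z y] at *
  simp only [hdt] at hxyz hzxy hyxz
  -- every sign pattern with `S x y ≠ S x z * S z y` is one of `m₅, …, m₉` in one of these orders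
  rcases hrange x y hxy with hc | hc | hc <;> rcases hrange x z hxz with ha | ha | ha <;>
    rcases hrange z y hyz.symm with hb | hb | hb <;>
    simp_all [inM3]

theorem eq_vecMulVec_sub_smul_one [DecidableEq ι] {σ : ι → ℤ} (hσ : ∀ i, σ i = 1 ∨ σ i = -1)
    (hdt : ∀ x, S x x = -(t : ℤ)) (hS : ∀ i j, i ≠ j → S i j = σ i * σ j) :
    S = vecMulVec σ σ - ((t : ℤ) + 1) • 1 := by
  ext i j
  by_cases hij : i = j
  · subst hij
    rcases hσ i with h | h <;> simp [hdt, h, vecMulVec_apply, sub_apply, natCast_apply]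
  · simp [hS i j hij, hij, vecMulVec_apply, sub_apply, natCast_apply]

theorem exists_sign_vector_of_not_isDecomposable [Fintype ι] [DecidableEq ι] [Nontrivial ι]
    (hsym : S.IsSymm) (hdiag : ∀ x, S x x ≤ -(t : ℤ)) (hle : ∀ x y, S x x ≤ S x y)
    (hoffdiag : ∀ x y, x ≠ y → S x y ≤ 1) (h1 : S.AvoidsPrincipalSubmatrix 1 (inM1 t))
    (h2 : S.AvoidsPrincipalSubmatrix 2 (inM2 t)) (h3 : S.AvoidsPrincipalSubmatrix 3 (inM3 t))
    (hirr : ¬ S.IsDecomposable) :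
    ∃ σ : ι → ℤ, (∀ i, σ i = 1 ∨ σ i = -1) ∧ S = vecMulVec σ σ - ((t : ℤ) + 1) • 1 := by
  have hdt := diag_eq_neg_of_not_isDecomposable hsym hdiag hle hoffdiag h1 h2 hirr
  have hrange x y (hxy : x ≠ y) := offDiag_eq_neg_one_or_zero_or_one hsym hdt hle hoffdiag h2 hxy
  have hmul x y z (hxy : x ≠ y) (hxz : x ≠ z) (hyz : y ≠ z) :=
    eq_mul_of_ne_zero_of_ne_zero hsym hdt hrange h3 hxy hxz hyz
  have hne x y (hxy : x ≠ y) : S x y ≠ 0 :=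
    ne_zero_of_not_isDecomposable hirr (fun x y z hxy hxz hyz hxz0 hzy0 => by
      rw [hmul x y z hxy hxz hyz hxz0 hzy0]; exact mul_ne_zero hxz0 hzy0) hxy
  obtain ⟨σ, hσ, hS⟩ := exists_sign_vector hsym
    (fun x y hxy => by have := hrange x y hxy; have := hne x y hxy; omega)
    (fun x y z hxy hxz hyz => hmul x y z hxy hxz hyz (hne x z hxz) (hne z y hyz.symm))
  exact ⟨σ, hσ, eq_vecMulVec_sub_smul_one hσ hdt hS⟩

theorem neg_sub_one_le_of_mem_spectrum [Fintype ι] [DecidableEq ι] {w : ι → ℤ}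
    (hS : S = vecMulVec w w - ((t : ℤ) + 1) • 1) {μ : ℝ}
    (hμ : μ ∈ spectrum ℝ (S.map (Int.cast : ℤ → ℝ))) : -(t : ℝ) - 1 ≤ μ := by
  have hmap : S.map (Int.cast : ℤ → ℝ) =
      vecMulVec (Int.cast ∘ w) (Int.cast ∘ w) - algebraMap ℝ _ ((t : ℝ) + 1) := by
    ext i j
    by_cases hij : i = j <;>
      simp [hS, hij, vecMulVec_apply, sub_apply, natCast_apply, algebraMap_eq_diagonal]
  rw [hmap] at hμ
  linarith [neg_le_of_mem_spectrum_vecMulVec_self_sub _ _ hμ]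

theorem entry_eq_of_eq_vecMulVec_sub [DecidableEq ι] {σ : ι → ℤ} (hσ : ∀ i, σ i = 1 ∨ σ i = -1)
    (hS : S = vecMulVec σ σ - ((t : ℤ) + 1) • 1) (i j : ι) :
    S i j = if i = j then -(t : ℤ) else σ i * σ j := by
  split_ifs with hij
  · subst hij
    rcases hσ i with h | h <;> simp [hS, h, vecMulVec_apply, sub_apply, natCast_apply]
  · simp [hS, hij, vecMulVec_apply, sub_apply, natCast_apply]

end Special

theorem structure_of_eq_vecMulVec_sub {t n : ℕ} {S : Matrix (Fin n) (Fin n) ℤ} {σ : Fin n → ℤ}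
    (hσ : ∀ i, σ i = 1 ∨ σ i = -1) (hS : S = vecMulVec σ σ - ((t : ℤ) + 1) • 1) :
    (∀ i j, S i j = if i = j then -(t : ℤ) else 1) ∨
    (∃ (e : Equiv.Perm (Fin n)) (r₁ r₂ : ℕ), 0 < r₁ ∧ 0 < r₂ ∧ r₁ + r₂ = n ∧
        ∀ i j, S (e i) (e j) =
          if i = j then -(t : ℤ)
          else if (((i : ℕ) < r₁) ↔ ((j : ℕ) < r₁)) then 1 else -1) := by
  obtain ⟨e, he⟩ := Fin.exists_perm_mem_iff_lt (univ.filter (σ · = 1))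
  set r := #(univ.filter (σ · = 1))
  have hσe : ∀ i, σ (e i) = if (i : ℕ) < r then 1 else -1 := by
    intro i
    have := he i
    simp only [mem_filter, mem_univ, true_and] at this
    split_ifs with h
    · exact this.mpr h
    · exact (hσ _).resolve_left (mt this.mp h)
  by_cases hr : 0 < r ∧ r < n
  · refine Or.inr ⟨e, r, n - r, hr.1, by omega, by omega, fun i j => ?_⟩
    simp only [entry_eq_of_eq_vecMulVec_sub hσ hS, e.injective.eq_iff, hσe]
    split_ifs <;> grind
  · refine Or.inl fun i j => ?_
    rw [entry_eq_of_eq_vecMulVec_sub hσ hS]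
    obtain ⟨i, rfl⟩ := e.surjective i
    obtain ⟨j, rfl⟩ := e.surjective j
    rw [hσe, hσe]
    split_ifs <;> first | rfl | omega

end Matrix

open Matrix

theorem structure_of_irreducible_special_matrices_general (t n : ℕ)
    (S : Matrix (Fin n) (Fin n) ℤ) (hsym : S.IsSymm)
    (hdiag : ∀ x, S x x ≤ -(t : ℤ))
    (hoffdiag : ∀ x y, x ≠ y → S x y ≤ 1)
    (hle : ∀ x y, S x x ≤ S x y)
    -- `S` is irreducible: it is not equivalent (under a simultaneous permutation of
    -- rows and columns) to a block diagonal matrix with at least two blocks.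
    (hirr : ¬ ∃ s : Finset (Fin n), s.Nonempty ∧ s ≠ Finset.univ ∧
      ∀ i ∈ s, ∀ j ∉ s, S i j = 0)
    -- no principal submatrix of `S` is equivalent to an element of `M(t)`:
    (h1 : ¬ ∃ f : Fin 1 → Fin n, Function.Injective f ∧
      ∃ e : Equiv.Perm (Fin 1), inM1 t ((S.submatrix f f).submatrix e e))
    (h2 : ¬ ∃ f : Fin 2 → Fin n, Function.Injective f ∧
      ∃ e : Equiv.Perm (Fin 2), inM2 t ((S.submatrix f f).submatrix e e))
    (h3 : ¬ ∃ f : Fin 3 → Fin n, Function.Injective f ∧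
      ∃ e : Equiv.Perm (Fin 3), inM3 t ((S.submatrix f f).submatrix e e)) :
    (∀ μ ∈ spectrum ℝ (S.map (fun z : ℤ => (z : ℝ))), -(t : ℝ) - 1 ≤ μ) ∧
    ((n = 1 ∧ ∀ i j, S i j = -(t : ℤ)) ∨
     (n = 1 ∧ ∀ i j, S i j = -(t : ℤ) - 1) ∨
     (∀ i j, S i j = if i = j then -(t : ℤ) else 1) ∨
     (∃ (e : Equiv.Perm (Fin n)) (r₁ r₂ : ℕ), 0 < r₁ ∧ 0 < r₂ ∧ r₁ + r₂ = n ∧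
        ∀ i j, S (e i) (e j) =
          if i = j then -(t : ℤ)
          else if (((i : ℕ) < r₁) ↔ ((j : ℕ) < r₁)) then 1 else -1)) := by
  obtain hn | hn : n ≤ 1 ∨ 2 ≤ n := by omega
  · interval_cases n
    · exact ⟨fun μ hμ => by simp [spectrum.of_subsingleton] at hμ,
        Or.inr (Or.inr (Or.inl finZeroElim))⟩
    · have hS : ∀ i j, S i j = S 0 0 := fun i j => by
        rw [Subsingleton.elim i 0, Subsingleton.elim j 0]
      rcases diag_eq_neg_or_eq_neg_sub_one hdiag h1 0 with h | h
      · refine ⟨fun μ => neg_sub_one_le_of_mem_spectrum (w := 1) ?_, Or.inl ⟨rfl, by simpa [hS]⟩⟩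
        ext i j; simp [hS, h, Subsingleton.elim i j, Matrix.natCast_apply]
      · refine ⟨fun μ => neg_sub_one_le_of_mem_spectrum (w := 0) ?_,
          Or.inr (Or.inl ⟨rfl, by simpa [hS]⟩)⟩
        ext i j; simp [hS, h, Subsingleton.elim i j, Matrix.natCast_apply]; ring
  · have : Nontrivial (Fin n) := Fin.nontrivial_iff_two_le.mpr hn
    obtain ⟨σ, hσ, hS⟩ :=
      exists_sign_vector_of_not_isDecomposable hsym hdiag hle hoffdiag h1 h2 h3 hirr
    exact ⟨fun μ => neg_sub_one_le_of_mem_spectrum hS,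
      Or.inr (Or.inr (structure_of_eq_vecMulVec_sub hσ hS))⟩

theorem structure_of_irreducible_special_matrices (t n : ℕ) (ht : 0 < t)
    (S : Matrix (Fin n) (Fin n) ℤ) (hsym : S.IsSymm)
    (hdiag : ∀ x, S x x ≤ -(t : ℤ))
    (hoffdiag : ∀ x y, x ≠ y → S x y ≤ 1)
    (hle : ∀ x y, S x x ≤ S x y)
    -- `S` is irreducible: it is not equivalent (under a simultaneous permutation of
    -- rows and columns) to a block diagonal matrix with at least two blocks.
    (hirr : ¬ ∃ s : Finset (Fin n), s.Nonempty ∧ s ≠ Finset.univ ∧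
      ∀ i ∈ s, ∀ j ∉ s, S i j = 0)
    -- no principal submatrix of `S` is equivalent to an element of `M(t)`:
    (h1 : ¬ ∃ f : Fin 1 → Fin n, Function.Injective f ∧
      ∃ e : Equiv.Perm (Fin 1), inM1 t ((S.submatrix f f).submatrix e e))
    (h2 : ¬ ∃ f : Fin 2 → Fin n, Function.Injective f ∧
      ∃ e : Equiv.Perm (Fin 2), inM2 t ((S.submatrix f f).submatrix e e))
    (h3 : ¬ ∃ f : Fin 3 → Fin n, Function.Injective f ∧
      ∃ e : Equiv.Perm (Fin 3), inM3 t ((S.submatrix f f).submatrix e e)) :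
    (∀ μ ∈ spectrum ℝ (S.map (fun z : ℤ => (z : ℝ))), -(t : ℝ) - 1 ≤ μ) ∧
    ((n = 1 ∧ ∀ i j, S i j = -(t : ℤ)) ∨
     (n = 1 ∧ ∀ i j, S i j = -(t : ℤ) - 1) ∨
     (∀ i j, S i j = if i = j then -(t : ℤ) else 1) ∨
     (∃ (e : Equiv.Perm (Fin n)) (r₁ r₂ : ℕ), 0 < r₁ ∧ 0 < r₂ ∧ r₁ + r₂ = n ∧
        ∀ i j, S (e i) (e j) =
          if i = j then -(t : ℤ)
          else if (((i : ℕ) < r₁) ↔ ((j : ℕ) < r₁)) then 1 else -1)) :=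
  structure_of_irreducible_special_matrices_general t n S hsym hdiag hoffdiag hle hirr h1 h2 h3
end

section
/- Let t be a positive integer and let S be an n×n symmetric real matrix with S_{xx} = -t for every index x and S_{xy} ∈ {1, -1} for all distinct indices x, y. If no 3×3 principal submatrix of S is equivalent to m_6(t) = [[-t,1,1],[1,-t,-1],[1,-1,-t]], then the relation R on the index set defined by x R y if and only if x = y or S_{xy} = 1 is an equivalence relation; if moreover no 3×3 principal submatrix of S equals m_5(t) = [[-t,-1,-1],[-1,-t,-1],[-1,-1,-t]], then R has at most two equivalence classes. -/
open Matrix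

theorem relation_from_special_matrix (t n : ℕ) (ht : 0 < t)
    (S : Matrix (Fin n) (Fin n) ℝ) (hsym : S.IsSymm)
    (hdiag : ∀ x, S x x = -(t : ℝ))
    (hoffdiag : ∀ x y, x ≠ y → S x y = 1 ∨ S x y = -1)
    -- no 3×3 principal submatrix of `S` is equivalent to `m₆(t)`:
    (h6 : ¬ ∃ f : Fin 3 → Fin n, Function.Injective f ∧
      ∃ e : Equiv.Perm (Fin 3), (S.submatrix f f).submatrix e e =
        !![-(t : ℝ), 1, 1; 1, -(t : ℝ), -1; 1, -1, -(t : ℝ)]) :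
    Equivalence (fun x y : Fin n => x = y ∨ S x y = 1) ∧
    -- if moreover no 3×3 principal submatrix of `S` equals `m₅(t)`,
    -- then there are at most two equivalence classes:
    ((¬ ∃ f : Fin 3 → Fin n, Function.Injective f ∧ S.submatrix f f =
        !![-(t : ℝ), -1, -1; -1, -(t : ℝ), -1; -1, -1, -(t : ℝ)]) →
      ∀ x y z : Fin n,
        (x = y ∨ S x y = 1) ∨ (x = z ∨ S x z = 1) ∨ (y = z ∨ S y z = 1)) := by
  have htne : (-(t:ℝ)) ≠ 1 := by
    have : (1:ℝ) ≤ (t:ℝ) := by exact_mod_cast ht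
    intro h; nlinarith
  have hne : ∀ x y : Fin n, S x y = 1 → x ≠ y := by
    intro x y h hxy; subst hxy; rw [hdiag] at h; exact htne h
  constructor
  · constructor
    · intro x; exact Or.inl rfl
    · intro x y h
      rcases h with h | h
      · exact Or.inl h.symm
      · exact Or.inr (by rw [← hsym.apply]; exact h)
    · intro x y z hxy hyz
      rcases hxy with rfl | hxy
      · exact hyz
      rcases hyz with rfl | hyz
      · exact Or.inr hxy
      by_cases hxz : x = z
      · exact Or.inl hxz
      rcases hoffdiag x z hxz with h1 | h1
      · exact Or.inr h1
      exfalso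
      have hxy' : x ≠ y := hne x y hxy
      have hyz' : y ≠ z := hne y z hyz
      apply h6
      refine ⟨![y, x, z], ?_, 1, ?_⟩
      · intro i j hij
        fin_cases i <;> fin_cases j <;> simp_all <;>
          first
          | rfl
          | (exact absurd hij.symm (by assumption))
          | (exact absurd hij (by assumption))
      · ext i j
        fin_cases i <;> fin_cases j <;>
          simp [Matrix.submatrix, Matrix.vecHead, Matrix.vecTail, hdiag, hxy, hyz, h1, hsym.apply, hsym.apply x y,
            hsym.apply y z, hsym.apply x z]
  · intro h5 x y z
    by_contra hc
    push_neg at hc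
    obtain ⟨⟨hxy, hxy1⟩, ⟨hxz, hxz1⟩, ⟨hyz, hyz1⟩⟩ := hc
    have e1 : S x y = -1 := (hoffdiag x y hxy).resolve_left hxy1
    have e2 : S x z = -1 := (hoffdiag x z hxz).resolve_left hxz1
    have e3 : S y z = -1 := (hoffdiag y z hyz).resolve_left hyz1
    apply h5
    refine ⟨![x, y, z], ?_, ?_⟩
    · intro i j hij
      fin_cases i <;> fin_cases j <;> simp_all
    · ext i j
      fin_cases i <;> fin_cases j <;>
        simp [Matrix.submatrix, Matrix.vecHead, Matrix.vecTail, hdiag, e1, e2, e3, hsym.apply x y, hsym.apply y z,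
          hsym.apply x z]
end

section
/- Let t be a positive integer. Then every matrix in M(t) has smallest eigenvalue at most -t-√2. -/
open Matrix

/-- The 1×1 real matrices of `M(t)`: `(-t+a)` for integers `a ≤ -2`. -/
def inM1R (t : ℕ) (B : Matrix (Fin 1) (Fin 1) ℝ) : Prop :=
  ∃ a : ℤ, a ≤ -2 ∧ B = !![-(t : ℝ) + (a : ℝ)]

/-- The 2×2 real matrices of `M(t)`. -/
def inM2R (t : ℕ) (B : Matrix (Fin 2) (Fin 2) ℝ) : Prop :=
  (∃ a : ℤ, -(t : ℤ) ≤ a ∧ a ≤ -2 ∧ B = !![-(t : ℝ), (a : ℝ); (a : ℝ), -(t : ℝ)]) ∨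
  (∃ a : ℤ, (a = 1 ∨ (-(t : ℤ) ≤ a ∧ a ≤ -1)) ∧
    B = !![-(t : ℝ) - 1, (a : ℝ); (a : ℝ), -(t : ℝ)]) ∨
  (∃ a : ℤ, (a = 1 ∨ (-(t : ℤ) - 1 ≤ a ∧ a ≤ -1)) ∧
    B = !![-(t : ℝ) - 1, (a : ℝ); (a : ℝ), -(t : ℝ) - 1])

/-- The 3×3 real matrices of `M(t)`: `m₅(t), m₆(t), m₇(t), m₈(t), m₉(t)`. -/
def inM3R (t : ℕ) (B : Matrix (Fin 3) (Fin 3) ℝ) : Prop :=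
  B = !![-(t : ℝ), -1, -1; -1, -(t : ℝ), -1; -1, -1, -(t : ℝ)] ∨
  B = !![-(t : ℝ), 1, 1; 1, -(t : ℝ), -1; 1, -1, -(t : ℝ)] ∨
  B = !![-(t : ℝ), 0, 1; 0, -(t : ℝ), -1; 1, -1, -(t : ℝ)] ∨
  B = !![-(t : ℝ), 0, 1; 0, -(t : ℝ), 1; 1, 1, -(t : ℝ)] ∨
  B = !![-(t : ℝ), 0, -1; 0, -(t : ℝ), -1; -1, -1, -(t : ℝ)]

lemma mem_spec_of_det {n : ℕ} (B : Matrix (Fin n) (Fin n) ℝ) (μ : ℝ)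
    (h : (algebraMap ℝ (Matrix (Fin n) (Fin n) ℝ) μ - B).det = 0) : μ ∈ spectrum ℝ B := by
  rw [spectrum.mem_iff]
  intro hu
  rw [Matrix.isUnit_iff_isUnit_det, h] at hu
  simp at hu

lemma alg_sub_one (μ a : ℝ) :
    algebraMap ℝ (Matrix (Fin 1) (Fin 1) ℝ) μ - !![a] = !![μ - a] := by
  ext i j
  fin_cases i <;> fin_cases j <;> simp [Matrix.algebraMap_matrix_apply]

lemma alg_sub_two (μ a b c d : ℝ) :
    algebraMap ℝ (Matrix (Fin 2) (Fin 2) ℝ) μ - !![a, b; c, d] = !![μ - a, -b; -c, μ - d] := by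
  ext i j
  fin_cases i <;> fin_cases j <;> simp [Matrix.algebraMap_matrix_apply]

lemma alg_sub_three (μ a b c d e f g h i : ℝ) :
    algebraMap ℝ (Matrix (Fin 3) (Fin 3) ℝ) μ - !![a, b, c; d, e, f; g, h, i] =
      !![μ - a, -b, -c; -d, μ - e, -f; -g, -h, μ - i] := by
  ext x y
  fin_cases x <;> fin_cases y <;> simp [Matrix.algebraMap_matrix_apply]

theorem matrices_in_Mt_small_eigenvalue (t : ℕ) (ht : 0 < t) :
    (∀ B : Matrix (Fin 1) (Fin 1) ℝ, inM1R t B →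
      ∃ μ ∈ spectrum ℝ B, μ ≤ -(t : ℝ) - Real.sqrt 2) ∧
    (∀ B : Matrix (Fin 2) (Fin 2) ℝ, inM2R t B →
      ∃ μ ∈ spectrum ℝ B, μ ≤ -(t : ℝ) - Real.sqrt 2) ∧
    (∀ B : Matrix (Fin 3) (Fin 3) ℝ, inM3R t B →
      ∃ μ ∈ spectrum ℝ B, μ ≤ -(t : ℝ) - Real.sqrt 2) := by
  have hs2 : Real.sqrt 2 ^ 2 = 2 := Real.sq_sqrt (by norm_num)
  have hs2nn : (0:ℝ) ≤ Real.sqrt 2 := Real.sqrt_nonneg 2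
  have hs2le : Real.sqrt 2 ≤ 2 := by nlinarith
  refine ⟨?_, ?_, ?_⟩
  · rintro B ⟨a, ha, rfl⟩
    refine ⟨-(t:ℝ) + a, mem_spec_of_det _ _ ?_, ?_⟩
    · rw [alg_sub_one]
      simp [Matrix.det_fin_one]
    · have : (a:ℝ) ≤ -2 := by exact_mod_cast ha
      nlinarith
  · rintro B (⟨a, _, ha2, rfl⟩ | ⟨a, ha, rfl⟩ | ⟨a, ha, rfl⟩)
    · refine ⟨-(t:ℝ) + a, mem_spec_of_det _ _ ?_, ?_⟩
      · rw [alg_sub_two, Matrix.det_fin_two_of]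
        ring
      · have : (a:ℝ) ≤ -2 := by exact_mod_cast ha2
        nlinarith
    · -- B = !![-t-1, a; a, -t]
      have ha1 : (1:ℝ) ≤ (a:ℝ)^2 := by
        rcases ha with rfl | ⟨_, ha⟩
        · norm_num
        · have : (a:ℝ) ≤ -1 := by exact_mod_cast ha
          nlinarith
      set s := Real.sqrt (1/4 + (a:ℝ)^2) with hsdef
      have hs : s ^ 2 = 1/4 + (a:ℝ)^2 := Real.sq_sqrt (by nlinarith)
      have hsnn : (0:ℝ) ≤ s := Real.sqrt_nonneg _
      have hs1 : (1:ℝ) ≤ s := by nlinarith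
      refine ⟨-(t:ℝ) - 1/2 - s, mem_spec_of_det _ _ ?_, ?_⟩
      · rw [alg_sub_two, Matrix.det_fin_two_of]
        nlinarith [hs]
      · nlinarith
    · -- B = !![-t-1, a; a, -t-1]
      have ha1 : (1:ℝ) ≤ (a:ℝ)^2 := by
        rcases ha with rfl | ⟨_, ha⟩
        · norm_num
        · have : (a:ℝ) ≤ -1 := by exact_mod_cast ha
          nlinarith
      set s := Real.sqrt ((a:ℝ)^2) with hsdef
      have hs : s ^ 2 = (a:ℝ)^2 := Real.sq_sqrt (by positivity)
      have hsnn : (0:ℝ) ≤ s := Real.sqrt_nonneg _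
      have hs1 : (1:ℝ) ≤ s := by nlinarith
      refine ⟨-(t:ℝ) - 1 - s, mem_spec_of_det _ _ ?_, ?_⟩
      · rw [alg_sub_two, Matrix.det_fin_two_of]
        nlinarith [hs]
      · nlinarith
  · rintro B (rfl | rfl | rfl | rfl | rfl)
    · refine ⟨-(t:ℝ) - 2, mem_spec_of_det _ _ ?_, by nlinarith⟩
      rw [alg_sub_three]
      simp only [Matrix.det_fin_three, Matrix.cons_val', Matrix.cons_val_zero,
        Matrix.cons_val_one, Matrix.head_cons, Matrix.empty_val', Matrix.cons_val_fin_one,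
        Matrix.head_fin_const, Matrix.of_apply, Matrix.cons_val_two, Matrix.tail_cons]
      ring
    · refine ⟨-(t:ℝ) - 2, mem_spec_of_det _ _ ?_, by nlinarith⟩
      rw [alg_sub_three]
      simp only [Matrix.det_fin_three, Matrix.cons_val', Matrix.cons_val_zero,
        Matrix.cons_val_one, Matrix.head_cons, Matrix.empty_val', Matrix.cons_val_fin_one,
        Matrix.head_fin_const, Matrix.of_apply, Matrix.cons_val_two, Matrix.tail_cons]
      ring
    · refine ⟨-(t:ℝ) - Real.sqrt 2, mem_spec_of_det _ _ ?_, le_refl _⟩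
      rw [alg_sub_three]
      simp only [Matrix.det_fin_three, Matrix.cons_val', Matrix.cons_val_zero,
        Matrix.cons_val_one, Matrix.head_cons, Matrix.empty_val', Matrix.cons_val_fin_one,
        Matrix.head_fin_const, Matrix.of_apply, Matrix.cons_val_two, Matrix.tail_cons]
      nlinarith [hs2]
    · refine ⟨-(t:ℝ) - Real.sqrt 2, mem_spec_of_det _ _ ?_, le_refl _⟩
      rw [alg_sub_three]
      simp only [Matrix.det_fin_three, Matrix.cons_val', Matrix.cons_val_zero,
        Matrix.cons_val_one, Matrix.head_cons, Matrix.empty_val', Matrix.cons_val_fin_one,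
        Matrix.head_fin_const, Matrix.of_apply, Matrix.cons_val_two, Matrix.tail_cons]
      nlinarith [hs2]
    · refine ⟨-(t:ℝ) - Real.sqrt 2, mem_spec_of_det _ _ ?_, le_refl _⟩
      rw [alg_sub_three]
      simp only [Matrix.det_fin_three, Matrix.cons_val', Matrix.cons_val_zero,
        Matrix.cons_val_one, Matrix.head_cons, Matrix.empty_val', Matrix.cons_val_fin_one,
        Matrix.head_fin_const, Matrix.of_apply, Matrix.cons_val_two, Matrix.tail_cons]
      nlinarith [hs2]
end
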